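/- arXiv:2507.13316 — 4 statements merged into one kernel-verified Lean document; each statement's English description precedes it below -/
import Mathlib

section
/- Let a : [0,1] → [0,1] be continuous with a(s) ≥ c√(1-s²) for some c > 0 (in particular a(1) = 0 with square-root decay). Then every function u in the weighted space H^a_0 = {u ∈ L²(0,1) : a²u' ∈ L²(0,1), u(0) = 0} satisfies the weighted Poincaré inequality ‖u‖_{L²(0,1)} ≤ C ‖a²u'‖_{L²(0,1)} for a constant C depending only on c. -/
/-!
Since `a(s)² ≥ c²(1 - s²) ≥ c²(1 - s)` on `[0, 1]`, it suffices to prove the Hardy inequality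
`∫₀¹ u² ≤ 4 ∫₀¹ ((1 - s) u')²` for `u(0) = 0`. Differentiating `(1 - s) u(s)²` gives
`∫₀ᵗ u² ≤ ∫₀ᵗ 2 (1 - s) u u'` for every `t < 1`; letting `t → 1` and using
`2 (1 - s) u u' ≤ u² / 2 + 2 ((1 - s) u')²` yields `‖u‖² ≤ ‖u‖² / 2 + 2 ‖(1 - s) u'‖²`.
-/

open MeasureTheory Set

theorem aestronglyMeasurable_restrict_of_hasDerivAt {μ : Measure ℝ} {f f' : ℝ → ℝ} {s : Set ℝ}
    (hs : MeasurableSet s) (hf : ∀ x ∈ s, HasDerivAt f (f' x) x) :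
    AEStronglyMeasurable f' (μ.restrict s) :=
  (aestronglyMeasurable_deriv f _).congr <|
    (ae_restrict_iff' hs).2 (.of_forall fun x hx => (hf x hx).deriv)

theorem setIntegral_Ioo_nonneg_of_forall_intervalIntegral_nonneg {f : ℝ → ℝ} {a b : ℝ}
    (hab : a < b) (hf : IntegrableOn f (Ioo a b)) (h : ∀ t ∈ Ioo a b, 0 ≤ ∫ x in a..t, f x) :
    0 ≤ ∫ x in Ioo a b, f x := by
  have hf_Icc : IntegrableOn f (uIcc a b) := by
    rw [uIcc_of_le hab.le]
    exact (integrableOn_Icc_iff_integrableOn_Ioo (f := f)).2 hf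
  have hprim := intervalIntegral.continuousOn_primitive_interval hf_Icc
  rw [uIcc_of_le hab.le] at hprim
  have hleft : ContinuousWithinAt (fun t => ∫ x in a..t, f x) (Iio b) b :=
    (hprim b ⟨hab.le, le_rfl⟩).mono_of_mem_nhdsWithin (Icc_mem_nhdsLT hab)
  rw [← integral_Ioc_eq_integral_Ioo, ← intervalIntegral.integral_of_le hab.le]
  exact ge_of_tendsto hleft (Filter.eventually_of_mem (Ioo_mem_nhdsLT hab) h)

theorem intervalIntegral_two_mul_sub_mul_deriv_sub_sq_nonneg {u u' : ℝ → ℝ} {a b t : ℝ}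
    (hat : a ≤ t) (htb : t ≤ b) (hu : ContinuousOn u (Icc a t))
    (hu' : ∀ x ∈ Ioo a t, HasDerivAt u (u' x) x) (hua : u a = 0)
    (hint : IntervalIntegrable (fun x => 2 * (b - x) * u x * u' x) volume a t) :
    0 ≤ ∫ x in a..t, (2 * (b - x) * u x * u' x - u x ^ 2) := by
  have hderiv : ∀ x ∈ Ioo a t,
      HasDerivAt (fun y => (b - y) * u y ^ 2) (2 * (b - x) * u x * u' x - u x ^ 2) x := by
    intro x hx
    refine (((hasDerivAt_id x).const_sub b).fun_mul ((hu' x hx).fun_pow 2)).congr_deriv ?_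
    simp only [id, Nat.cast_ofNat, Nat.add_one_sub_one, pow_one]
    ring
  have hsq : IntervalIntegrable (fun x => u x ^ 2) volume a t :=
    (hu.pow 2).intervalIntegrable_of_Icc hat
  have hcont : ContinuousOn (fun y => (b - y) * u y ^ 2) (Icc a t) :=
    (continuousOn_const.sub continuousOn_id).mul (hu.pow 2)
  rw [intervalIntegral.integral_eq_sub_of_hasDerivAt_of_le hat hcont hderiv (hint.sub hsq), hua,
    zero_pow two_ne_zero, mul_zero, sub_zero]
  exact mul_nonneg (sub_nonneg.2 htb) (sq_nonneg _)

theorem integral_sq_le_four_mul_integral_sq_sub_mul_deriv {u u' : ℝ → ℝ} {a b : ℝ}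
    (hab : a < b) (hu : ContinuousOn u (Ico a b)) (hu' : ∀ x ∈ Ioo a b, HasDerivAt u (u' x) x)
    (hua : u a = 0) (hu2 : IntegrableOn (fun x => u x ^ 2) (Ioo a b))
    (hw2 : IntegrableOn (fun x => ((b - x) * u' x) ^ 2) (Ioo a b)) :
    ∫ x in Ioo a b, u x ^ 2 ≤ 4 * ∫ x in Ioo a b, ((b - x) * u' x) ^ 2 := by
  have hu_meas : AEStronglyMeasurable u (volume.restrict (Ioo a b)) :=
    (hu.mono Ioo_subset_Ico_self).aestronglyMeasurable measurableSet_Ioo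
  have hw_meas : AEStronglyMeasurable (fun x => (b - x) * u' x) (volume.restrict (Ioo a b)) :=
    (aestronglyMeasurable_const.sub aestronglyMeasurable_id).mul
      (aestronglyMeasurable_restrict_of_hasDerivAt measurableSet_Ioo hu')
  have huw : IntegrableOn (fun x => 2 * (b - x) * u x * u' x) (Ioo a b) := by
    have := (((memLp_two_iff_integrable_sq hu_meas).2 hu2).integrable_mul
      ((memLp_two_iff_integrable_sq hw_meas).2 hw2)).const_mul 2
    refine this.congr (.of_forall fun x => ?_)
    simp only [Pi.mul_apply]
    ring
  have h_sq_le : ∫ x in Ioo a b, u x ^ 2 ≤ ∫ x in Ioo a b, 2 * (b - x) * u x * u' x := by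
    have := setIntegral_Ioo_nonneg_of_forall_intervalIntegral_nonneg hab
      (f := fun x => 2 * (b - x) * u x * u' x - u x ^ 2) (huw.sub hu2)
      fun t ht => intervalIntegral_two_mul_sub_mul_deriv_sub_sq_nonneg ht.1.le ht.2.le
        (hu.mono (Icc_subset_Ico_right ht.2)) (fun x hx => hu' x ⟨hx.1, hx.2.trans ht.2⟩) hua
        ((intervalIntegrable_iff_integrableOn_Ioc_of_le ht.1.le).2
          (huw.mono_set (Ioc_subset_Ioo_right ht.2)))
    rwa [integral_sub huw hu2, sub_nonneg] at this
  have h_amgm : ∫ x in Ioo a b, 2 * (b - x) * u x * u' x ≤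
      ∫ x in Ioo a b, (u x ^ 2 / 2 + 2 * ((b - x) * u' x) ^ 2) := by
    refine setIntegral_mono_on huw ((hu2.div_const 2).add (hw2.const_mul 2)) measurableSet_Ioo
      fun x _ => ?_
    nlinarith [two_mul_le_add_sq (u x) (2 * ((b - x) * u' x))]
  rw [integral_add (hu2.div_const 2) (hw2.const_mul 2), integral_div, integral_const_mul]
    at h_amgm
  linarith

theorem pow_four_mul_sq_one_sub_mul_le {a c s v : ℝ} (hc : 0 ≤ c) (hs : s ∈ Icc 0 1)
    (ha : c * √(1 - s ^ 2) ≤ a) : c ^ 4 * ((1 - s) * v) ^ 2 ≤ (a ^ 2 * v) ^ 2 := by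
  have h1s : 0 ≤ 1 - s := sub_nonneg.2 hs.2
  have hweight : c ^ 2 * (1 - s) ≤ a ^ 2 :=
    calc c ^ 2 * (1 - s) ≤ c ^ 2 * (1 - s ^ 2) := by gcongr; nlinarith [hs.1]
      _ = (c * √(1 - s ^ 2)) ^ 2 := by rw [mul_pow, Real.sq_sqrt (by nlinarith [hs.1])]
      _ ≤ a ^ 2 := by gcongr
  calc c ^ 4 * ((1 - s) * v) ^ 2 = (c ^ 2 * (1 - s)) ^ 2 * v ^ 2 := by ring
    _ ≤ (a ^ 2) ^ 2 * v ^ 2 := by gcongr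
    _ = (a ^ 2 * v) ^ 2 := by ring

/-- Weighted Poincaré (Hardy-type) inequality: if `a : [0,1] → [0,1]` is continuous with
`a(s) ≥ c√(1-s²)`, then every `u` with `u(0) = 0`, `u ∈ L²(0,1)` and `a²u' ∈ L²(0,1)`
satisfies `‖u‖_{L²}² ≤ C ‖a²u'‖_{L²}²` with `C` depending only on `c`. -/
theorem stmt_3 (c : ℝ) (hc : 0 < c) :
    ∃ C > 0, ∀ (a u u' : ℝ → ℝ),
      ContinuousOn a (Set.Icc 0 1) →
      (∀ s ∈ Set.Icc (0:ℝ) 1, a s ∈ Set.Icc (0:ℝ) 1) →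
      (∀ s ∈ Set.Icc (0:ℝ) 1, c * Real.sqrt (1 - s ^ 2) ≤ a s) →
      ContinuousOn u (Set.Ico 0 1) →
      (∀ s ∈ Set.Ioo (0:ℝ) 1, HasDerivAt u (u' s) s) →
      u 0 = 0 →
      IntegrableOn (fun s => (u s) ^ 2) (Set.Ioo 0 1) →
      IntegrableOn (fun s => ((a s) ^ 2 * u' s) ^ 2) (Set.Ioo 0 1) →
      ∫ s in Set.Ioo (0:ℝ) 1, (u s) ^ 2 ≤
        C * ∫ s in Set.Ioo (0:ℝ) 1, ((a s) ^ 2 * u' s) ^ 2 := by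
  refine ⟨4 / c ^ 4, by positivity, fun a u u' _ _ ha hu hu' hu0 hu2 hau' => ?_⟩
  have hw : ∀ s ∈ Ioo (0:ℝ) 1, ((1 - s) * u' s) ^ 2 ≤ (a s ^ 2 * u' s) ^ 2 / c ^ 4 :=
    fun s hs => by
      rw [le_div_iff₀ (by positivity), mul_comm]
      exact pow_four_mul_sq_one_sub_mul_le hc.le (Ioo_subset_Icc_self hs)
        (ha s (Ioo_subset_Icc_self hs))
  have hw2 : IntegrableOn (fun s => ((1 - s) * u' s) ^ 2) (Ioo 0 1) := by
    have hmeas : AEStronglyMeasurable (fun s => ((1 - s) * u' s) ^ 2) (volume.restrict (Ioo 0 1)) :=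
      ((aestronglyMeasurable_const.sub aestronglyMeasurable_id).mul
        (aestronglyMeasurable_restrict_of_hasDerivAt measurableSet_Ioo hu')).pow 2
    refine (hau'.div_const (c ^ 4)).mono' hmeas
      ((ae_restrict_iff' measurableSet_Ioo).2 (.of_forall fun s hs => ?_))
    rw [Real.norm_of_nonneg (sq_nonneg _)]
    exact hw s hs
  calc ∫ s in Ioo 0 1, u s ^ 2 ≤ 4 * ∫ s in Ioo 0 1, ((1 - s) * u' s) ^ 2 :=
        integral_sq_le_four_mul_integral_sq_sub_mul_deriv zero_lt_one hu hu' hu0 hu2 hw2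
    _ ≤ 4 * ∫ s in Ioo 0 1, (a s ^ 2 * u' s) ^ 2 / c ^ 4 := by
        gcongr 4 * ?_
        exact setIntegral_mono_on hw2 (hau'.div_const _) measurableSet_Ioo hw
    _ = 4 / c ^ 4 * ∫ s in Ioo 0 1, (a s ^ 2 * u' s) ^ 2 := by
        rw [integral_div]
        ring
end

section
/- Let a : [0,1] → [0,∞) be continuous with a > 0 on [0,1), let α(s) = c·a(s) for some constant c > 0, and let f ∈ L^∞(0,1). If v ∈ H^a_0 is the weak solution (energy minimizer) of (a⁴v')' - α v = α f with v(0) = 0 and natural (no-flux) condition at s = 1, then ‖v‖_{L^∞(0,1)} ≤ 2‖f‖_{L^∞(0,1)}. -/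
open MeasureTheory Real

/-- Membership in the weighted space `H^a_0(0,1)`: `w` is continuous up to `s = 0`,
weakly differentiable on `(0,1)` with derivative `w'`, `w ∈ L²`, `a²w' ∈ L²`, `w(0) = 0`. -/
def MemHa (a w w' : ℝ → ℝ) : Prop :=
  ContinuousOn w (Set.Ico 0 1) ∧
  (∀ s ∈ Set.Ioo (0:ℝ) 1, HasDerivAt w (w' s) s) ∧
  IntegrableOn (fun s => (w s) ^ 2) (Set.Ioo 0 1) ∧
  IntegrableOn (fun s => ((a s) ^ 2 * w' s) ^ 2) (Set.Ioo 0 1) ∧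
  w 0 = 0

/-- The energy `E[w] = (1/2)∫₀¹ (a⁴(w')² + α w²) - ∫₀¹ α f w` with `α = c·a`. -/
noncomputable def energyE (a : ℝ → ℝ) (c : ℝ) (f w w' : ℝ → ℝ) : ℝ :=
  (1 / 2) * ∫ s in Set.Ioo (0:ℝ) 1,
      ((a s) ^ 4 * (w' s) ^ 2 + c * a s * (w s) ^ 2)
    - ∫ s in Set.Ioo (0:ℝ) 1, c * a s * f s * w s

/-! Compare `v` with `w = G ∘ v`, where `G = softClamp M` is a C¹ version of the clamp to
`[-M, M]`: `0 < G' ≤ 1`, `G x = x` on `[-M, M]`, and `G x` lies strictly between `±M` and `x`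
outside. Then `w ∈ H^a_0` has no more weighted Dirichlet energy than `v`, and the rest of
`E[v] - E[w]` has the pointwise density `(c a / 2) (v - w) (v + w - f)`, which is `≥ 0` when
`|f| ≤ 2M` and `> 0` where `|v| > M`. Minimality forces it to vanish a.e., so `|v| ≤ M` a.e. -/

open Set

-- A C¹ substitute for `min x M`: `MemHa` asks for a derivative at every point, which rules out
-- the kinked clamp.
noncomputable def softCap (M x : ℝ) : ℝ := if x ≤ M then x else M + 1 - exp (M - x)

noncomputable def softCapDeriv (M x : ℝ) : ℝ := if x ≤ M then 1 else exp (M - x)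

namespace softCap

variable {M x : ℝ}

lemma eq_self (h : x ≤ M) : softCap M x = x := if_pos h

lemma hasDerivAt (M x : ℝ) : HasDerivAt (softCap M) (softCapDeriv M x) x := by
  have hexp : ∀ y, HasDerivAt (fun z => M + 1 - exp (M - z)) (exp (M - y)) y := fun y => by
    simpa using (((hasDerivAt_id y).const_sub M).exp).const_sub (M + 1)
  rcases lt_trichotomy x M with hx | rfl | hx
  · rw [softCapDeriv, if_pos hx.le]
    refine (hasDerivAt_id x).congr_of_eventuallyEq ?_
    filter_upwards [Iic_mem_nhds hx] with y hy using eq_self hy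
  · have hleft : HasDerivWithinAt (softCap x) 1 (Iic x) x :=
      (hasDerivWithinAt_id x _).congr (fun y hy => eq_self hy) (eq_self le_rfl)
    have hright : HasDerivWithinAt (softCap x) 1 (Ici x) x := by
      have h := (hexp x).hasDerivWithinAt (s := Ici x)
      rw [sub_self, exp_zero] at h
      refine h.congr (fun y hy => ?_) ?_
      · rcases (mem_Ici.1 hy).eq_or_lt with rfl | hy
        · simp [softCap]
        · exact if_neg hy.not_ge
      · simp [softCap]
    rw [softCapDeriv, if_pos le_rfl]
    simpa using (hleft.union hright).hasDerivAt (by simp)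
  · rw [softCapDeriv, if_neg hx.not_ge]
    refine (hexp x).congr_of_eventuallyEq ?_
    filter_upwards [Ioi_mem_nhds hx] with y hy using if_neg (not_le.2 hy)

lemma mem_Ioo (h : M < x) : softCap M x ∈ Ioo M x := by
  rw [softCap, if_neg h.not_ge]
  constructor
  · linarith [exp_lt_one_iff.2 (sub_neg.2 h)]
  · linarith [add_one_lt_exp (sub_ne_zero.2 h.ne)]

lemma deriv_pos (M x : ℝ) : 0 < softCapDeriv M x := by
  unfold softCapDeriv; split_ifs <;> positivity

lemma deriv_le_one (M x : ℝ) : softCapDeriv M x ≤ 1 := by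
  unfold softCapDeriv; split_ifs with h
  · exact le_rfl
  · exact exp_le_one_iff.2 (by linarith [not_le.1 h])

end softCap

noncomputable def softClamp (M x : ℝ) : ℝ := -softCap M (-softCap M x)

noncomputable def softClampDeriv (M x : ℝ) : ℝ :=
  softCapDeriv M (-softCap M x) * softCapDeriv M x

namespace softClamp

variable {M x f₀ : ℝ}

lemma hasDerivAt (M x : ℝ) : HasDerivAt (softClamp M) (softClampDeriv M x) x := by
  have h := ((softCap.hasDerivAt M (-softCap M x)).comp x (softCap.hasDerivAt M x).neg).neg
  rwa [mul_neg, neg_neg] at h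

lemma continuous (M : ℝ) : Continuous (softClamp M) :=
  continuous_iff_continuousAt.2 fun x => (hasDerivAt M x).continuousAt

lemma abs_deriv_le_one (M x : ℝ) : |softClampDeriv M x| ≤ 1 := by
  have h₁ := softCap.deriv_pos M x
  have h₂ := softCap.deriv_pos M (-softCap M x)
  rw [softClampDeriv, abs_of_pos (mul_pos h₂ h₁)]
  exact mul_le_one₀ (softCap.deriv_le_one _ _) h₁.le (softCap.deriv_le_one _ _)

lemma eq_self (h : |x| ≤ M) : softClamp M x = x := by
  rw [abs_le] at h
  rw [softClamp, softCap.eq_self h.2, softCap.eq_self (by linarith), neg_neg]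

lemma apply_zero (hM : 0 ≤ M) : softClamp M 0 = 0 := eq_self (by simpa using hM)

lemma mem_Ioo_of_lt (hM : 0 ≤ M) (h : M < x) : softClamp M x ∈ Ioo M x := by
  obtain ⟨h₁, h₂⟩ := softCap.mem_Ioo h
  rw [softClamp, softCap.eq_self (by linarith), neg_neg]
  exact ⟨h₁, h₂⟩

lemma mem_Ioo_of_lt_neg (hM : 0 ≤ M) (h : x < -M) : softClamp M x ∈ Ioo x (-M) := by
  obtain ⟨h₁, h₂⟩ := softCap.mem_Ioo (M := M) (x := -x) (by linarith)
  rw [softClamp, softCap.eq_self (by linarith : x ≤ M)]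
  constructor <;> linarith

lemma eq_zero_iff (hM : 0 ≤ M) : softClamp M x = 0 ↔ x = 0 := by
  refine ⟨fun h => ?_, fun h => h ▸ apply_zero hM⟩
  rcases le_or_gt |x| M with hx | hx
  · rwa [eq_self hx] at h
  · rcases lt_abs.1 hx with hx | hx
    · linarith [(mem_Ioo_of_lt hM hx).1]
    · linarith [(mem_Ioo_of_lt_neg hM (by linarith)).2]

lemma sub_mul_add_sub_pos (hf : |f₀| ≤ 2 * M) (hx : M < |x|) :
    0 < (x - softClamp M x) * (x + softClamp M x - f₀) := by
  have hM : 0 ≤ M := by linarith [abs_nonneg f₀]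
  rw [abs_le] at hf
  rcases lt_abs.1 hx with hx | hx
  · obtain ⟨h₁, h₂⟩ := mem_Ioo_of_lt hM hx
    exact mul_pos (by linarith) (by linarith)
  · obtain ⟨h₁, h₂⟩ := mem_Ioo_of_lt_neg hM (by linarith)
    exact mul_pos_of_neg_of_neg (by linarith) (by linarith)

lemma sub_mul_add_sub_nonneg (hf : |f₀| ≤ 2 * M) :
    0 ≤ (x - softClamp M x) * (x + softClamp M x - f₀) := by
  rcases le_or_gt |x| M with hx | hx
  · simp [eq_self hx]
  · exact (sub_mul_add_sub_pos hf hx).le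

end softClamp

lemma abs_le_abs_of_hasDerivAt {φ φ' : ℝ → ℝ} (hφ : ∀ x, HasDerivAt φ (φ' x) x)
    (hφ' : ∀ x, |φ' x| ≤ 1) (hφ0 : φ 0 = 0) (x : ℝ) : |φ x| ≤ |x| := by
  simpa [hφ0] using convex_univ.norm_image_sub_le_of_norm_hasDerivWithin_le
    (fun y _ => (hφ y).hasDerivWithinAt) (fun y _ => hφ' y) (mem_univ 0) (mem_univ x)

section

variable {α : Type*} [MeasurableSpace α] {μ : Measure α}

lemma integrable_mul_comp_iff {g u : α → ℝ} {φ : ℝ → ℝ} {B : ℝ} (hφ : Measurable φ)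
    (hφ_abs : ∀ x, |φ x| ≤ |x|) (hφ_eq_zero : ∀ x, φ x = 0 → x = 0)
    (hg : ∀ᵐ s ∂μ, |g s| ≤ B) (hu : Integrable u μ) :
    Integrable (fun s => g s * φ (u s)) μ ↔ Integrable (fun s => g s * u s) μ := by
  have hφu : Integrable (φ ∘ u) μ :=
    hu.norm.mono' (hφ.comp_aemeasurable hu.aemeasurable).aestronglyMeasurable
      (ae_of_all _ fun s => hφ_abs (u s))
  -- `g` need not be measurable: measurability of `g * q` is transported along `q / p`.
  have transfer : ∀ p q : α → ℝ, AEStronglyMeasurable p μ → Integrable q μ →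
      (∀ s, p s = 0 → q s = 0) → Integrable (fun s => g s * p s) μ →
      Integrable (fun s => g s * q s) μ := by
    intro p q hp hq hpq hgp
    have hratio : (fun s => g s * q s) = fun s => g s * p s * (q s / p s) := by
      ext s
      by_cases hs : p s = 0
      · simp [hs, hpq s hs]
      · field_simp
    refine (hq.norm.const_mul B).mono' ?_ ?_
    · rw [hratio]
      exact hgp.aestronglyMeasurable.mul (hq.aemeasurable.div hp.aemeasurable).aestronglyMeasurable
    · filter_upwards [hg] with s hs
      rw [norm_mul, Real.norm_eq_abs]
      exact mul_le_mul_of_nonneg_right hs (norm_nonneg _)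
  have hφ0 : φ 0 = 0 := abs_nonpos_iff.1 (by simpa using hφ_abs 0)
  exact ⟨transfer (φ ∘ u) u hφu.aestronglyMeasurable hu fun s h => hφ_eq_zero _ h,
    transfer u (φ ∘ u) hu.aestronglyMeasurable hφu fun s h => by simp [h, hφ0]⟩

-- If neither integral exists, both are the junk value `0`, which `t = 0` reproduces.
lemma exists_integral_sub_eq_integral_mul {g₁ g₂ : α → ℝ}
    (h : Integrable g₁ μ ↔ Integrable g₂ μ) :
    ∃ t ∈ Icc (0:ℝ) 1, Integrable (fun s => t * (g₁ s - g₂ s)) μ ∧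
      ∫ s, g₁ s ∂μ - ∫ s, g₂ s ∂μ = ∫ s, t * (g₁ s - g₂ s) ∂μ := by
  by_cases h₁ : Integrable g₁ μ
  · refine ⟨1, by simp, ?_, by simp [integral_sub h₁ (h.1 h₁)]⟩
    simp only [one_mul]
    exact h₁.sub (h.1 h₁)
  · exact ⟨0, by simp, by simp, by simp [integral_undef h₁, integral_undef (h.not.1 h₁)]⟩

end

namespace MemHa

variable {a w w' : ℝ → ℝ}

lemma aestronglyMeasurable (hw : MemHa a w w') :
    AEStronglyMeasurable w (volume.restrict (Ioo 0 1)) :=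
  (hw.1.mono Ioo_subset_Ico_self).aestronglyMeasurable measurableSet_Ioo

lemma integrableOn (hw : MemHa a w w') : IntegrableOn w (Ioo 0 1) :=
  ((memLp_two_iff_integrable_sq hw.aestronglyMeasurable).2 hw.2.2.1).integrable one_le_two

lemma comp {φ φ' : ℝ → ℝ} (hw : MemHa a w w') (hφ : ∀ x, HasDerivAt φ (φ' x) x)
    (hφ' : ∀ x, |φ' x| ≤ 1) (hφ0 : φ 0 = 0) :
    MemHa a (φ ∘ w) fun s => φ' (w s) * w' s := by
  have hφc : Continuous φ := continuous_iff_continuousAt.2 fun x => (hφ x).continuousAt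
  have hφ'm : Measurable φ' := by
    rw [show φ' = deriv φ from funext fun x => (hφ x).deriv.symm]
    exact measurable_deriv φ
  have hwm := hw.aestronglyMeasurable
  obtain ⟨hwc, hwd, hw2, hw'2, hw0⟩ := hw
  refine ⟨hφc.comp_continuousOn hwc, fun s hs => (hφ (w s)).comp s (hwd s hs), ?_, ?_,
    by simp [hw0, hφ0]⟩
  · refine hw2.mono' ((hφc.comp_aestronglyMeasurable hwm).pow 2)
      (ae_of_all _ fun s => ?_)
    rw [norm_pow, Real.norm_eq_abs, ← sq_abs (w s)]
    exact pow_le_pow_left₀ (abs_nonneg _) (abs_le_abs_of_hasDerivAt hφ hφ' hφ0 _) 2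
  · have hsplit : (fun s => (a s ^ 2 * (φ' (w s) * w' s)) ^ 2)
        = fun s => φ' (w s) ^ 2 * (a s ^ 2 * w' s) ^ 2 := by
      ext s; ring
    rw [IntegrableOn, hsplit]
    refine hw'2.bdd_mul (c := 1)
      ((hφ'm.comp_aemeasurable hwm.aemeasurable).pow_const 2).aestronglyMeasurable
      (ae_of_all _ fun s => ?_)
    rw [norm_pow, Real.norm_eq_abs, sq_abs, sq_le_one_iff_abs_le_one]
    exact hφ' _

lemma integrableOn_energy (c : ℝ) (hw : MemHa a w w') (ha : ContinuousOn a (Icc 0 1)) :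
    IntegrableOn (fun s => a s ^ 4 * w' s ^ 2 + c * a s * w s ^ 2) (Ioo 0 1) := by
  refine IntegrableOn.add ?_ ((hw.2.2.1.continuousOn_mul_of_subset (continuousOn_const.mul ha)
    isCompact_Icc measurableSet_Ioo Ioo_subset_Icc_self))
  simpa only [mul_pow, ← pow_mul] using hw.2.2.2.1

-- In `energyE` the term `∫ c a f w` lies inside the first integral, as a constant;
-- `Ioo 0 1` has measure one, so it integrates to itself.
lemma energyE_eq (c : ℝ) (f : ℝ → ℝ) (hw : MemHa a w w') (ha : ContinuousOn a (Icc 0 1)) :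
    energyE a c f w w' = (1 / 2) *
      ((∫ s in Ioo (0:ℝ) 1, (a s ^ 4 * w' s ^ 2 + c * a s * w s ^ 2))
        - ∫ s in Ioo (0:ℝ) 1, c * a s * f s * w s) := by
  rw [energyE, integral_sub (hw.integrableOn_energy c ha) (integrable_const _), setIntegral_const]
  simp [volume_real_Ioo]

lemma exists_integral_energy_sub_nonpos {v v' f : ℝ → ℝ} {c : ℝ}
    (ha : ContinuousOn a (Icc 0 1)) (hv : MemHa a v v') (hw : MemHa a w w')
    (hR : IntegrableOn (fun s => c * a s * f s * v s) (Ioo 0 1) ↔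
      IntegrableOn (fun s => c * a s * f s * w s) (Ioo 0 1))
    (hE : energyE a c f v v' ≤ energyE a c f w w') :
    ∃ t ∈ Icc (0:ℝ) 1,
      IntegrableOn (fun s => (a s ^ 4 * v' s ^ 2 + c * a s * v s ^ 2)
        - (a s ^ 4 * w' s ^ 2 + c * a s * w s ^ 2)
        - t * (c * a s * f s * v s - c * a s * f s * w s)) (Ioo 0 1) ∧
      ∫ s in Ioo 0 1, ((a s ^ 4 * v' s ^ 2 + c * a s * v s ^ 2)
        - (a s ^ 4 * w' s ^ 2 + c * a s * w s ^ 2)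
        - t * (c * a s * f s * v s - c * a s * f s * w s)) ≤ 0 := by
  obtain ⟨t, ht, ht_int, ht_eq⟩ := exists_integral_sub_eq_integral_mul hR
  have hdv := hv.integrableOn_energy c ha
  have hdw := hw.integrableOn_energy c ha
  have hdiff : IntegrableOn (fun s => (a s ^ 4 * v' s ^ 2 + c * a s * v s ^ 2)
      - (a s ^ 4 * w' s ^ 2 + c * a s * w s ^ 2)) (Ioo 0 1) := hdv.sub hdw
  refine ⟨t, ht, hdiff.sub ht_int, ?_⟩
  rw [hv.energyE_eq c f ha, hw.energyE_eq c f ha] at hE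
  rw [integral_sub hdiff ht_int, integral_sub hdv hdw, ← ht_eq]
  linarith

end MemHa

theorem MemHa.ae_abs_le_of_forall_energyE_le {a f v v' : ℝ → ℝ} {c M : ℝ} (hc : 0 < c)
    (ha : ContinuousOn a (Icc 0 1)) (hapos : ∀ s ∈ Ioo (0:ℝ) 1, 0 < a s)
    (hf : ∀ s ∈ Ioo (0:ℝ) 1, |f s| ≤ 2 * M) (hv : MemHa a v v')
    (hmin : ∀ w w' : ℝ → ℝ, MemHa a w w' → energyE a c f v v' ≤ energyE a c f w w') :
    ∀ᵐ s ∂volume.restrict (Ioo (0:ℝ) 1), |v s| ≤ M := by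
  have hM : 0 ≤ M := by linarith [abs_nonneg (f (1 / 2)), hf (1 / 2) (by norm_num)]
  set w := softClamp M ∘ v
  set w' := fun s => softClampDeriv M (v s) * v' s
  have hw : MemHa a w w' :=
    hv.comp (softClamp.hasDerivAt M) (softClamp.abs_deriv_le_one M) (softClamp.apply_zero hM)
  obtain ⟨K, hK⟩ := isCompact_Icc.exists_bound_of_continuousOn ha
  have hg : ∀ᵐ s ∂volume.restrict (Ioo (0:ℝ) 1), |c * a s * f s| ≤ c * K * (2 * M) := by
    refine ae_restrict_of_forall_mem measurableSet_Ioo fun s hs => ?_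
    have haK : |a s| ≤ K := by simpa using hK s (Ioo_subset_Icc_self hs)
    rw [abs_mul, abs_mul, abs_of_pos hc, mul_assoc, mul_assoc]
    exact mul_le_mul_of_nonneg_left
      (mul_le_mul haK (hf s hs) (abs_nonneg _) ((abs_nonneg _).trans haK)) hc.le
  obtain ⟨t, ht, hΦ_int, hΦ_nonpos⟩ := hv.exists_integral_energy_sub_nonpos ha hw
    (integrable_mul_comp_iff (softClamp.continuous M).measurable
      (abs_le_abs_of_hasDerivAt (softClamp.hasDerivAt M) (softClamp.abs_deriv_le_one M)
        (softClamp.apply_zero hM)) (fun x => (softClamp.eq_zero_iff hM).1) hg hv.integrableOn).symm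
    (hmin w w' hw)
  set Φ : ℝ → ℝ := fun s => (a s ^ 4 * v' s ^ 2 + c * a s * v s ^ 2)
    - (a s ^ 4 * w' s ^ 2 + c * a s * w s ^ 2) - t * (c * a s * f s * v s - c * a s * f s * w s)
  have hΦ_ge : ∀ s ∈ Ioo (0:ℝ) 1,
      c * a s * ((v s - w s) * (v s + w s - t * f s)) ≤ Φ s := fun s _ => by
    -- the gap is `(a² v')² (1 - G'(v)²)`
    have hφ' := (sq_le_one_iff_abs_le_one _).2 (softClamp.abs_deriv_le_one M (v s))
    nlinarith [sq_nonneg (a s ^ 2 * v' s)]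
  have hf_t : ∀ s ∈ Ioo (0:ℝ) 1, |t * f s| ≤ 2 * M := fun s hs => by
    rw [abs_mul, abs_of_nonneg ht.1]
    exact (mul_le_of_le_one_left (abs_nonneg _) ht.2).trans (hf s hs)
  have hΦ_nonneg : 0 ≤ᵐ[volume.restrict (Ioo (0:ℝ) 1)] Φ :=
    ae_restrict_of_forall_mem measurableSet_Ioo fun s hs =>
      (mul_nonneg (mul_pos hc (hapos s hs)).le
        (softClamp.sub_mul_add_sub_nonneg (hf_t s hs))).trans (hΦ_ge s hs)
  have hΦ_zero : Φ =ᵐ[volume.restrict (Ioo (0:ℝ) 1)] 0 :=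
    (integral_eq_zero_iff_of_nonneg_ae hΦ_nonneg hΦ_int).1
      (le_antisymm hΦ_nonpos (integral_nonneg_of_ae hΦ_nonneg))
  filter_upwards [hΦ_zero, ae_restrict_mem measurableSet_Ioo] with s hs0 hs
  by_contra! hv_gt
  have hpos : 0 < c * a s * ((v s - w s) * (v s + w s - t * f s)) :=
    mul_pos (mul_pos hc (hapos s hs)) (softClamp.sub_mul_add_sub_pos (hf_t s hs) hv_gt)
  exact (hpos.trans_le (hΦ_ge s hs)).ne' hs0

theorem stmt_4_general (a f v v' : ℝ → ℝ) (c F : ℝ) (hc : 0 < c)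
    (ha : ContinuousOn a (Set.Icc 0 1))
    (hapos : ∀ s ∈ Set.Ico (0:ℝ) 1, 0 < a s)
    (hF : ∀ s ∈ Set.Ioo (0:ℝ) 1, |f s| ≤ F)
    (hv : MemHa a v v')
    (hmin : ∀ w w' : ℝ → ℝ, MemHa a w w' → energyE a c f v v' ≤ energyE a c f w w') :
    ∀ᵐ s ∂(volume.restrict (Set.Ioo (0:ℝ) 1)), |v s| ≤ 2 * F := by
  have hF0 : 0 ≤ F := (abs_nonneg _).trans (hF (1 / 2) (by norm_num))
  have hv_le := hv.ae_abs_le_of_forall_energyE_le hc ha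
    (fun s hs => hapos s (Ioo_subset_Ico_self hs)) (fun s hs => (hF s hs).trans (by linarith)) hmin
  filter_upwards [hv_le] with s hs
  linarith

/-- Maximum principle: the energy minimizer `v` of `(a⁴v')' - αv = αf`, `v(0)=0`,
with `α = c·a`, satisfies `|v| ≤ 2‖f‖_∞` a.e. on `(0,1)`. -/
theorem stmt_4 (a f v v' : ℝ → ℝ) (c F : ℝ) (hc : 0 < c)
    (ha : ContinuousOn a (Set.Icc 0 1))
    (hanneg : ∀ s ∈ Set.Icc (0:ℝ) 1, 0 ≤ a s)
    (hapos : ∀ s ∈ Set.Ico (0:ℝ) 1, 0 < a s)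
    (hF : ∀ s ∈ Set.Ioo (0:ℝ) 1, |f s| ≤ F)
    (hv : MemHa a v v')
    (hmin : ∀ w w' : ℝ → ℝ, MemHa a w w' → energyE a c f v v' ≤ energyE a c f w w') :
    ∀ᵐ s ∂(volume.restrict (Set.Ioo (0:ℝ) 1)), |v s| ≤ 2 * F :=
  stmt_4_general a f v v' c F hc ha hapos hF hv hmin
end

section
/- Let X : [0,1] → ℝ³ be a unit-speed C² curve with curvature bound κ⋆ and bi-Lipschitz constant c_Γ := inf_{s₁≠s₂} |X(s₁)−X(s₂)|/|s₁−s₂| > 0. Let R_ε = s̄ e_t(s) + εa(s) e_r + s̄² Q(s, s̄) with e_t(s) ⊥ e_r, |e_t| = |e_r| = 1, |Q| ≤ κ⋆/2, a(s) ∈ [0,1], ε > 0. Then | |R_ε| − √(s̄² + ε²a(s)²) | ≤ (κ⋆/2) s̄², and for ε sufficiently small (depending only on κ⋆, c_Γ) one has |R_ε| ≥ c √(s̄² + ε²a(s)²) with c depending only on κ⋆ and c_Γ. -/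
/-!
Near the diagonal, Taylor's formula with the curvature bound gives
`X s - X t = (s - t) • X' s + O(κ⋆ s̄²)`, and `(s - t) • X' s + εa • e_r` is a sum of orthogonal
vectors of norm exactly `√(s̄² + ε²a²)`; this is the two-sided estimate. For the lower bound,
either `κ⋆ s̄² ≤ √(s̄² + ε²a²)`, and the estimate already gives half of it, or `|s̄| > 1/(κ⋆ + 1)`;
then for `ε` small the term `εa` is at most `c_Γ |s̄| / 2` and the bi-Lipschitz bound
`‖X s - X t‖ ≥ c_Γ |s̄|` dominates.
-/

open Real RealInnerProductSpace

section Taylor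

variable {E : Type*} [NormedAddCommGroup E] [NormedSpace ℝ E]

theorem norm_sub_le_of_norm_hasDerivWithinAt_le_deriv {g g' : ℝ → E} {B B' : ℝ → ℝ} {a b : ℝ}
    (hab : a ≤ b) (hg : ∀ u ∈ Set.Icc a b, HasDerivWithinAt g (g' u) (Set.Icc a b) u)
    (hB : ∀ u, HasDerivAt B (B' u) u) (hbd : ∀ u ∈ Set.Icc a b, ‖g' u‖ ≤ B' u) :
    ‖g b - g a‖ ≤ B b - B a := by
  have hcont : ContinuousOn (fun u => g u - g a) (Set.Icc a b) :=
    (fun u hu => (hg u hu).continuousWithinAt.sub continuousWithinAt_const)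
  have hderiv : ∀ u ∈ Set.Ico a b, HasDerivWithinAt (fun u => g u - g a) (g' u) (Set.Ici u) u :=
    fun u hu => ((hg u (Set.Ico_subset_Icc_self hu)).sub_const (g a)).mono_of_mem_nhdsWithin
      (Icc_mem_nhdsGE_of_mem hu)
  exact image_norm_le_of_norm_deriv_right_le_deriv_boundary hcont hderiv (B := fun u => B u - B a)
    (by simp) (fun u => (hB u).sub_const _) (fun u hu => hbd u (Set.Ico_subset_Icc_self hu))
    (Set.right_mem_Icc.2 hab)

-- `taylor_mean_remainder_bound` would need `f''` continuous; here it is only bounded.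
theorem norm_sub_sub_smul_deriv_le {D : Set ℝ} (hD : Convex ℝ D) {f f' f'' : ℝ → E} {K s t : ℝ}
    (hf : ∀ u ∈ D, HasDerivWithinAt f (f' u) D u)
    (hf' : ∀ u ∈ D, HasDerivWithinAt f' (f'' u) D u) (hK : ∀ u ∈ D, ‖f'' u‖ ≤ K)
    (hs : s ∈ D) (ht : t ∈ D) :
    ‖f s - f t - (s - t) • f' s‖ ≤ K / 2 * (s - t) ^ 2 := by
  have hlip : ∀ u ∈ D, ‖f' u - f' s‖ ≤ K * |u - s| := fun u hu => by
    simpa only [Real.norm_eq_abs] using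
      hD.norm_image_sub_le_of_norm_hasDerivWithin_le hf' hK hs hu
  set g : ℝ → E := fun u => f u - u • f' s
  have hg : ∀ u ∈ D, HasDerivWithinAt g (f' u - f' s) D u := fun u hu => by
    have h := (hf u hu).sub ((hasDerivWithinAt_id u D).smul_const (f' s))
    rwa [one_smul] at h
  have hgst : g s - g t = f s - f t - (s - t) • f' s := by
    simp only [g, sub_smul]; abel
  rw [← hgst]
  rcases le_total s t with hst | hts
  · have hsub := hD.ordConnected.out hs ht
    have h := norm_sub_le_of_norm_hasDerivWithinAt_le_deriv hst
      (fun u hu => (hg u (hsub hu)).mono hsub) (B := fun u => K / 2 * (u - s) ^ 2)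
      (fun u => (((hasDerivAt_id u).sub_const s).pow 2).const_mul (K / 2))
      (fun u hu => (hlip u (hsub hu)).trans_eq (by simp [abs_of_nonneg (sub_nonneg.2 hu.1)]; ring))
    rw [norm_sub_rev]
    simpa [sub_sq_comm t s] using h
  · have hsub := hD.ordConnected.out ht hs
    have h := norm_sub_le_of_norm_hasDerivWithinAt_le_deriv hts
      (fun u hu => (hg u (hsub hu)).mono hsub)
      (B := fun u => K / 2 * ((s - t) ^ 2 - (s - u) ^ 2))
      (fun u => ((((hasDerivAt_const u s).sub (hasDerivAt_id u)).pow 2).const_sub _).const_mul _)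
      (fun u hu => (hlip u (hsub hu)).trans_eq (by simp [abs_of_nonpos (sub_nonpos.2 hu.2)]; ring))
    simpa using h

end Taylor

section Geometry

variable {E : Type*} [NormedAddCommGroup E] [InnerProductSpace ℝ E]

theorem norm_smul_add_smul_of_orthonormal {T e : E} (hT : ‖T‖ = 1) (he : ‖e‖ = 1)
    (hTe : ⟪e, T⟫ = 0) (σ l : ℝ) : ‖σ • T + l • e‖ = √(σ ^ 2 + l ^ 2) := by
  have horth : ⟪σ • T, l • e⟫ = 0 := by
    rw [real_inner_smul_left, real_inner_smul_right, real_inner_comm, hTe, mul_zero, mul_zero]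
  rw [← Real.sqrt_sq (norm_nonneg _), sq, norm_add_sq_eq_norm_sq_add_norm_sq_real horth,
    norm_smul, norm_smul, hT, he, Real.norm_eq_abs, Real.norm_eq_abs]
  congr 1
  simp only [mul_one, ← sq, sq_abs]

theorem abs_norm_add_smul_sub_sqrt_le {v T e : E} {σ l δ : ℝ} (hT : ‖T‖ = 1) (he : ‖e‖ = 1)
    (hTe : ⟪e, T⟫ = 0) (hv : ‖v - σ • T‖ ≤ δ) :
    |‖v + l • e‖ - √(σ ^ 2 + l ^ 2)| ≤ δ := by
  rw [← norm_smul_add_smul_of_orthonormal hT he hTe]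
  calc |‖v + l • e‖ - ‖σ • T + l • e‖| ≤ ‖v + l • e - (σ • T + l • e)‖ := abs_norm_sub_norm_le _ _
    _ = ‖v - σ • T‖ := by rw [add_sub_add_right_eq_sub]
    _ ≤ δ := hv

end Geometry

theorem min_mul_sqrt_le_of_le {κ c σ l r : ℝ} (hκ : 0 ≤ κ) (hc : 0 < c) (hl : 0 ≤ l)
    (hlσ : l * (κ + 1) < min 1 (c / 2))
    (hr₁ : √(σ ^ 2 + l ^ 2) - κ / 2 * σ ^ 2 ≤ r) (hr₂ : c * |σ| - l ≤ r) :
    min (1 / 2) (c / 4) * √(σ ^ 2 + l ^ 2) ≤ r := by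
  set S := √(σ ^ 2 + l ^ 2)
  have hS : |σ| ≤ S := Real.abs_le_sqrt (le_add_of_nonneg_right (sq_nonneg l))
  rcases le_or_gt (κ * σ ^ 2) S with hnear | hfar
  · calc min (1 / 2) (c / 4) * S ≤ 1 / 2 * S := by gcongr; exact min_le_left _ _
      _ ≤ r := by linarith
  · -- `κσ² > S ≥ |σ|` keeps `|σ|` away from `0`, so `l` is small compared with `|σ|`
    have hσ : 1 < (κ + 1) * |σ| := by
      have : |σ| < κ * |σ| * |σ| := by rw [mul_assoc, ← sq, sq_abs]; linarith
      nlinarith [abs_nonneg σ]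
    have hl₁ : l ≤ |σ| := by nlinarith [min_le_left 1 (c / 2), abs_nonneg σ]
    have hl₂ : l ≤ c / 2 * |σ| := by nlinarith [min_le_right 1 (c / 2), abs_nonneg σ]
    have hS₂ : S ≤ 2 * |σ| := Real.sqrt_le_iff.2 ⟨by positivity, by nlinarith [sq_abs σ]⟩
    calc min (1 / 2) (c / 4) * S ≤ c / 4 * S := by gcongr; exact min_le_right _ _
      _ ≤ c / 4 * (2 * |σ|) := by gcongr
      _ ≤ r := by linarith

/-- Basic geometric estimate for `R_ε = X(s) - X(t) + εa e_r` along a unit-speed `C²` curve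
with curvature bound `κ⋆` and bi-Lipschitz constant `c_Γ`: writing `s̄ = s - t`,
`||R_ε| - √(s̄² + ε²a²)| ≤ (κ⋆/2)s̄²`, and for `ε` small (depending only on `κ⋆, c_Γ`)
`|R_ε| ≥ c√(s̄² + ε²a²)` with `c = c(κ⋆, c_Γ) > 0`. -/
theorem stmt_14 (κs cΓ : ℝ) (hκs : 0 ≤ κs) (hcΓ : 0 < cΓ) :
    ∃ ε₀ > 0, ∃ c > 0,
      ∀ (X X' X'' : ℝ → EuclideanSpace ℝ (Fin 3)) (er : EuclideanSpace ℝ (Fin 3))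
        (a ε s t : ℝ),
        (∀ u ∈ Set.Icc (0:ℝ) 1, HasDerivWithinAt X (X' u) (Set.Icc 0 1) u) →
        (∀ u ∈ Set.Icc (0:ℝ) 1, HasDerivWithinAt X' (X'' u) (Set.Icc 0 1) u) →
        (∀ u ∈ Set.Icc (0:ℝ) 1, ‖X' u‖ = 1) →
        (∀ u ∈ Set.Icc (0:ℝ) 1, ‖X'' u‖ ≤ κs) →
        (∀ s₁ ∈ Set.Icc (0:ℝ) 1, ∀ s₂ ∈ Set.Icc (0:ℝ) 1,
          cΓ * |s₁ - s₂| ≤ ‖X s₁ - X s₂‖) →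
        ‖er‖ = 1 → ⟪er, X' s⟫ = (0:ℝ) →
        s ∈ Set.Icc (0:ℝ) 1 → t ∈ Set.Icc (0:ℝ) 1 →
        0 < ε → a ∈ Set.Icc (0:ℝ) 1 →
        (|‖X s - X t + (ε * a) • er‖ - Real.sqrt ((s - t) ^ 2 + ε ^ 2 * a ^ 2)|
            ≤ κs / 2 * (s - t) ^ 2) ∧
        (ε < ε₀ →
          c * Real.sqrt ((s - t) ^ 2 + ε ^ 2 * a ^ 2) ≤ ‖X s - X t + (ε * a) • er‖) := by
  refine ⟨min 1 (cΓ / 2) / (κs + 1), by positivity, min (1 / 2) (cΓ / 4), by positivity, ?_⟩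
  intro X X' X'' er a ε s t hX hX' hunit hcurv hbilip her horth hs ht hε ha
  rw [← mul_pow]
  have hupper : |‖X s - X t + (ε * a) • er‖ - √((s - t) ^ 2 + (ε * a) ^ 2)|
      ≤ κs / 2 * (s - t) ^ 2 :=
    abs_norm_add_smul_sub_sqrt_le (hunit s hs) her horth
      (norm_sub_sub_smul_deriv_le (convex_Icc 0 1) hX hX' hcurv hs ht)
  refine ⟨hupper, fun hε₀ => ?_⟩
  have hεa : 0 ≤ ε * a := mul_nonneg hε.le ha.1
  have hεaε : ε * a ≤ ε := mul_le_of_le_one_right hε.le ha.2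
  have hbilip_shift : cΓ * |s - t| - ε * a ≤ ‖X s - X t + (ε * a) • er‖ := by
    have h := norm_sub_le (X s - X t + (ε * a) • er) ((ε * a) • er)
    rw [add_sub_cancel_right, norm_smul, her, mul_one, Real.norm_of_nonneg hεa] at h
    linarith [hbilip s hs t ht]
  exact min_mul_sqrt_le_of_le hκs hcΓ hεa
    (by rw [lt_div_iff₀ (by positivity)] at hε₀; nlinarith)
    (by linarith [(abs_le.1 hupper).1]) hbilip_shift
end

section
/- Let a : [0,1] → [0,∞) be continuous with a(s) ≥ c√(1−s) near s = 1 (c > 0) and a(s) ≤ C₁√(1−s) near 1, and let v : [0,1) → ℝ be C¹ on [0,1) with a²v' ∈ L²(0,1) and |(a⁴v')'(s)| ≤ M a(s) for a.e. s. Then a⁴(s)v'(s) → 0 as s → 1 and |a⁴(s) v'(s)| ≤ C M a³(s) for s near 1, with C depending only on c, C₁. -/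
open MeasureTheory Real

lemma aux_not_int {l : ℝ} (hl : l < 1) :
    ¬ IntegrableOn (fun s : ℝ => ((1 - s)⁻¹) ^ 2) (Set.Ioo l 1) := by
  intro h
  have e : MeasurePreserving (fun t : ℝ => 1 - t) volume volume :=
    Measure.measurePreserving_sub_left volume 1
  have emb : MeasurableEmbedding (fun t : ℝ => 1 - t) :=
    (MeasurableEquiv.subLeft (1:ℝ)).measurableEmbedding
  have hpre : (fun t : ℝ => 1 - t) ⁻¹' Set.Ioo 0 (1 - l) = Set.Ioo l 1 := by
    ext x
    simp only [Set.mem_preimage, Set.mem_Ioo]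
    constructor <;> (rintro ⟨h1, h2⟩; constructor <;> linarith)
  have key := e.integrableOn_comp_preimage emb
    (f := fun x : ℝ => (x⁻¹) ^ 2) (s := Set.Ioo 0 (1 - l))
  rw [hpre] at key
  have h2 : IntegrableOn (fun x : ℝ => (x⁻¹) ^ 2) (Set.Ioo 0 (1 - l)) := key.1 h
  have h3 : IntegrableOn (fun x : ℝ => x ^ (-2 : ℝ)) (Set.Ioo 0 (1 - l)) := by
    apply h2.congr_fun _ measurableSet_Ioo
    intro x hx
    show x⁻¹ ^ 2 = x ^ (-2 : ℝ)
    rw [Real.rpow_neg hx.1.le, show ((2:ℝ) = ((2:ℕ):ℝ)) by norm_num, Real.rpow_natCast, inv_pow]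
  rw [intervalIntegral.integrableOn_Ioo_rpow_iff (by linarith : (0:ℝ) < 1 - l)] at h3
  linarith

lemma phi_deriv {s : ℝ} (hs : s < 1) :
    HasDerivAt (fun u : ℝ => (1 - u) * Real.sqrt (1 - u)) (-(3/2) * Real.sqrt (1 - s)) s := by
  have h0 : (0:ℝ) < 1 - s := by linarith
  have hsq0 : Real.sqrt (1 - s) ≠ 0 := by positivity
  have h1 : HasDerivAt (fun u : ℝ => 1 - u) (-1) s := by
    simpa using (hasDerivAt_id s).const_sub 1
  have h2 : HasDerivAt (fun u : ℝ => Real.sqrt (1 - u)) (1 / (2 * Real.sqrt (1 - s)) * (-1)) s :=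
    (Real.hasDerivAt_sqrt h0.ne').comp s h1
  have h3 : HasDerivAt (fun u : ℝ => (1 - u) * Real.sqrt (1 - u)) _ s := h1.mul h2
  convert h3 using 1
  have : Real.sqrt (1 - s) * Real.sqrt (1 - s) = 1 - s := Real.mul_self_sqrt h0.le
  field_simp
  nlinarith [Real.sqrt_nonneg (1 - s)]

/-- Weighted endpoint gradient bound: if `c√(1-s) ≤ a(s) ≤ C₁√(1-s)` near `s = 1`,
`a²v' ∈ L²(0,1)`, and `|(a⁴v')'| ≤ M a` on `(0,1)`, then `a⁴v' → 0` as `s → 1` and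
`|a⁴v'(s)| ≤ C M a(s)³` near `1`, with `C` depending only on `c, C₁`. -/
theorem stmt_18 (c C₁ : ℝ) (hc : 0 < c) (hC₁ : 0 < C₁) :
    ∃ C > 0, ∀ (δ M : ℝ) (a v v' w' : ℝ → ℝ),
      0 < δ → δ < 1 → 0 ≤ M →
      ContinuousOn a (Set.Icc 0 1) →
      (∀ s ∈ Set.Ico (1 - δ) (1:ℝ),
        c * Real.sqrt (1 - s) ≤ a s ∧ a s ≤ C₁ * Real.sqrt (1 - s)) →
      (∀ s ∈ Set.Ico (0:ℝ) 1, HasDerivAt v (v' s) s) →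
      IntegrableOn (fun s => ((a s) ^ 2 * v' s) ^ 2) (Set.Ioo 0 1) →
      (∀ s ∈ Set.Ioo (0:ℝ) 1, HasDerivAt (fun u => (a u) ^ 4 * v' u) (w' s) s) →
      (∀ s ∈ Set.Ioo (0:ℝ) 1, |w' s| ≤ M * a s) →
      Filter.Tendsto (fun s => (a s) ^ 4 * v' s) (nhdsWithin 1 (Set.Iio 1)) (nhds 0) ∧
      ∀ s ∈ Set.Ico (1 - δ) (1:ℝ), |(a s) ^ 4 * v' s| ≤ C * M * (a s) ^ 3 := by
  refine ⟨2 * C₁ / (3 * c ^ 3), by positivity, ?_⟩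
  intro δ M a v v' w' hδ hδ1 hM hacont hab hv hInt hw hwb
  set s₀ : ℝ := 1 - δ with hs₀def
  have hs₀0 : 0 < s₀ := by simp only [hs₀def]; linarith
  have hs₀1 : s₀ < 1 := by simp only [hs₀def]; linarith
  set g : ℝ → ℝ := fun s => (a s) ^ 4 * v' s with hgdef
  set φ : ℝ → ℝ := fun u => (1 - u) * Real.sqrt (1 - u) with hφdef
  set κ : ℝ := 2 / 3 * (M * C₁) with hκdef
  have hκ0 : 0 ≤ κ := by positivity
  have hφnn : ∀ s ≤ (1:ℝ), 0 ≤ φ s := by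
    intro s hs
    have : (0:ℝ) ≤ 1 - s := by linarith
    simp only [hφdef]
    positivity
  have hmem : ∀ x ∈ Set.Ico s₀ 1, x ∈ Set.Ioo (0:ℝ) 1 :=
    fun x hx => ⟨hs₀0.trans_le hx.1, hx.2⟩
  set h₁ : ℝ → ℝ := fun s => g s + κ * φ s with h1def
  set h₂ : ℝ → ℝ := fun s => g s - κ * φ s with h2def
  have hd1 : ∀ x ∈ Set.Ico s₀ 1, HasDerivAt h₁ (w' x - M * C₁ * Real.sqrt (1 - x)) x := by
    intro x hx
    have : HasDerivAt h₁ _ x := (hw x (hmem x hx)).add ((phi_deriv hx.2).const_mul κ)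
    convert this using 1
    simp only [hκdef]; ring
  have hd2 : ∀ x ∈ Set.Ico s₀ 1, HasDerivAt h₂ (w' x + M * C₁ * Real.sqrt (1 - x)) x := by
    intro x hx
    have : HasDerivAt h₂ _ x := (hw x (hmem x hx)).sub ((phi_deriv hx.2).const_mul κ)
    convert this using 1
    simp only [hκdef]; ring
  have hderbd : ∀ x ∈ Set.Ico s₀ 1, |w' x| ≤ M * C₁ * Real.sqrt (1 - x) := by
    intro x hx
    have h1 := hwb x (hmem x hx)
    have h2 := (hab x hx).2
    calc |w' x| ≤ M * a x := h1
      _ ≤ M * (C₁ * Real.sqrt (1 - x)) := mul_le_mul_of_nonneg_left h2 hM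
      _ = M * C₁ * Real.sqrt (1 - x) := by ring
  have hmono : MonotoneOn h₂ (Set.Ico s₀ 1) := by
    apply monotoneOn_of_deriv_nonneg (convex_Ico _ _)
    · exact fun x hx => (hd2 x hx).continuousAt.continuousWithinAt
    · rw [interior_Ico]
      exact fun x hx =>
        (hd2 x ⟨hx.1.le, hx.2⟩).differentiableAt.differentiableWithinAt
    · rw [interior_Ico]
      intro x hx
      have hx' : x ∈ Set.Ico s₀ 1 := ⟨hx.1.le, hx.2⟩
      rw [(hd2 x hx').deriv]
      have := abs_le.1 (hderbd x hx')
      linarith [this.1]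
  have hanti : AntitoneOn h₁ (Set.Ico s₀ 1) := by
    apply antitoneOn_of_deriv_nonpos (convex_Ico _ _)
    · exact fun x hx => (hd1 x hx).continuousAt.continuousWithinAt
    · rw [interior_Ico]
      exact fun x hx =>
        (hd1 x ⟨hx.1.le, hx.2⟩).differentiableAt.differentiableWithinAt
    · rw [interior_Ico]
      intro x hx
      have hx' : x ∈ Set.Ico s₀ 1 := ⟨hx.1.le, hx.2⟩
      rw [(hd1 x hx').deriv]
      have := abs_le.1 (hderbd x hx')
      linarith [this.2]
  have h21 : ∀ x ∈ Set.Ico s₀ 1, h₂ x ≤ h₁ x := by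
    intro x hx
    have := hφnn x hx.2.le
    simp only [h1def, h2def]
    nlinarith
  set G : ℝ → ℝ := fun s => h₂ (max s s₀) with hGdef
  have hmax : ∀ s ∈ Set.Iio (1:ℝ), max s s₀ ∈ Set.Ico s₀ 1 :=
    fun s hs => ⟨le_max_right _ _, max_lt hs hs₀1⟩
  have hGmono : MonotoneOn G (Set.Iio 1) := by
    intro x hx y hy hxy
    exact hmono (hmax x hx) (hmax y hy) (max_le_max hxy le_rfl)
  have hGbdd : BddAbove (G '' Set.Iio 1) := by
    refine ⟨h₁ s₀, ?_⟩
    rintro _ ⟨t, ht, rfl⟩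
    have htm := hmax t ht
    calc G t = h₂ (max t s₀) := rfl
      _ ≤ h₁ (max t s₀) := h21 _ htm
      _ ≤ h₁ s₀ := hanti (Set.left_mem_Ico.2 hs₀1) htm htm.1
  set L : ℝ := sSup (G '' Set.Iio 1) with hLdef
  have htendG : Filter.Tendsto G (nhdsWithin 1 (Set.Iio 1)) (nhds L) :=
    hGmono.tendsto_nhdsLT hGbdd
  have hGeq : G =ᶠ[nhdsWithin 1 (Set.Iio 1)] h₂ := by
    filter_upwards [Ioo_mem_nhdsLT hs₀1] with s hs
    simp only [hGdef, max_eq_left hs.1.le]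
  have htendh2 : Filter.Tendsto h₂ (nhdsWithin 1 (Set.Iio 1)) (nhds L) :=
    htendG.congr' hGeq
  have hφcont : Continuous φ := by
    simp only [hφdef]
    exact (continuous_const.sub continuous_id).mul
      ((continuous_const.sub continuous_id).sqrt)
  have hφtend : Filter.Tendsto φ (nhdsWithin 1 (Set.Iio 1)) (nhds 0) := by
    have : Filter.Tendsto φ (nhds 1) (nhds (φ 1)) := hφcont.tendsto 1
    have hφ1 : φ 1 = 0 := by simp [hφdef]
    rw [hφ1] at this
    exact this.mono_left nhdsWithin_le_nhds
  have htendg : Filter.Tendsto g (nhdsWithin 1 (Set.Iio 1)) (nhds L) := by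
    have := htendh2.add (hφtend.const_mul κ)
    simp only [mul_zero, add_zero] at this
    convert this using 2 with s
    simp only [h2def]; ring
  -- key two-sided bound
  have hkey : ∀ s ∈ Set.Ico s₀ 1, |g s - L| ≤ κ * φ s := by
    intro s hs
    have h2s : h₂ s ≤ L := by
      have hGs : G s = h₂ s := by simp only [hGdef, max_eq_left hs.1]
      rw [← hGs]
      exact le_csSup hGbdd ⟨s, hs.2, rfl⟩
    have h1s : L ≤ h₁ s := by
      refine csSup_le ⟨G s₀, Set.mem_image_of_mem G hs₀1⟩ ?_
      rintro _ ⟨t, ht, rfl⟩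
      have htm := hmax t ht
      by_cases hts : max t s₀ ≤ s
      · calc G t = h₂ (max t s₀) := rfl
          _ ≤ h₂ s := hmono htm hs hts
          _ ≤ h₁ s := h21 s hs
      · push_neg at hts
        calc G t = h₂ (max t s₀) := rfl
          _ ≤ h₁ (max t s₀) := h21 _ htm
          _ ≤ h₁ s := hanti hs htm hts.le
    rw [abs_sub_le_iff]
    constructor
    · simp only [h2def] at h2s; linarith
    · simp only [h1def] at h1s; linarith
  -- L = 0
  have hL0 : L = 0 := by
    by_contra hL
    have habs : Filter.Tendsto (fun s => |g s|) (nhdsWithin 1 (Set.Iio 1)) (nhds |L|) :=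
      htendg.abs
    have hev : ∀ᶠ s in nhdsWithin 1 (Set.Iio 1), |L| / 2 < |g s| :=
      habs.eventually_const_lt (by linarith [abs_pos.2 hL])
    have hev2 : ∀ᶠ s in nhdsWithin 1 (Set.Iio 1), s ∈ Set.Ioo s₀ 1 :=
      Ioo_mem_nhdsLT hs₀1
    obtain ⟨l, hl1, hsub⟩ := mem_nhdsLT_iff_exists_Ioo_subset.1 (hev.and hev2)
    set l' : ℝ := max l s₀ with hl'def
    have hl'1 : l' < 1 := max_lt hl1 hs₀1
    refine aux_not_int hl'1 ?_
    have hsub01 : Set.Ioo l' 1 ⊆ Set.Ioo (0:ℝ) 1 := fun x hx =>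
      ⟨hs₀0.trans ((le_max_right l s₀).trans_lt hx.1), hx.2⟩
    have hIntl : IntegrableOn (fun s => ((a s) ^ 2 * v' s) ^ 2) (Set.Ioo l' 1) :=
      hInt.mono_set hsub01
    have hL2 : 0 < L ^ 2 := by
      have := abs_pos.2 hL
      nlinarith [sq_abs L]
    set k : ℝ := L ^ 2 / (4 * C₁ ^ 4) with hkdef
    have hk : 0 < k := by positivity
    apply Integrable.mono' (hIntl.const_mul k⁻¹)
    · apply Measurable.aestronglyMeasurable
      fun_prop
    · rw [ae_restrict_iff' measurableSet_Ioo]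
      apply ae_of_all
      intro s hs'
      have hsl : s ∈ Set.Ioo l 1 := ⟨(le_max_left l s₀).trans_lt hs'.1, hs'.2⟩
      obtain ⟨hgs, hsIoo⟩ := hsub hsl
      have hsIco : s ∈ Set.Ico s₀ 1 := ⟨hsIoo.1.le, hsIoo.2⟩
      have hu : (0:ℝ) < 1 - s := by linarith [hs'.2]
      have hsqu : (0:ℝ) < Real.sqrt (1 - s) := Real.sqrt_pos.2 hu
      have hA : 0 < a s := lt_of_lt_of_le (by positivity) (hab s hsIco).1
      have hAub : a s ≤ C₁ * Real.sqrt (1 - s) := (hab s hsIco).2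
      have hA4 : (a s) ^ 4 ≤ C₁ ^ 4 * (1 - s) ^ 2 := by
        have h4 := pow_le_pow_left₀ hA.le hAub 4
        have hsq : Real.sqrt (1 - s) ^ 2 = 1 - s := Real.sq_sqrt hu.le
        calc (a s) ^ 4 ≤ (C₁ * Real.sqrt (1 - s)) ^ 4 := h4
          _ = C₁ ^ 4 * (Real.sqrt (1 - s) ^ 2) ^ 2 := by ring
          _ = C₁ ^ 4 * (1 - s) ^ 2 := by rw [hsq]
      have hg2 : L ^ 2 / 4 ≤ (g s) ^ 2 := by
        have h1 : (|L| / 2) ^ 2 ≤ |g s| ^ 2 :=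
          pow_le_pow_left₀ (by positivity) hgs.le 2
        have h2 : |g s| ^ 2 = (g s) ^ 2 := sq_abs _
        have h3 : (|L| / 2) ^ 2 = L ^ 2 / 4 := by
          rw [div_pow, sq_abs]; norm_num
        linarith
      have hmain : k * ((1 - s)⁻¹) ^ 2 ≤ ((a s) ^ 2 * v' s) ^ 2 := by
        have hgeq : (g s) ^ 2 = ((a s) ^ 2 * v' s) ^ 2 * (a s) ^ 4 := by
          simp only [hgdef]; ring
        have hstep : k * ((1 - s)⁻¹) ^ 2 * (a s) ^ 4 ≤ ((a s) ^ 2 * v' s) ^ 2 * (a s) ^ 4 := by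
          calc k * ((1 - s)⁻¹) ^ 2 * (a s) ^ 4
              ≤ k * ((1 - s)⁻¹) ^ 2 * (C₁ ^ 4 * (1 - s) ^ 2) := by
                apply mul_le_mul_of_nonneg_left hA4 (by positivity)
            _ = L ^ 2 / 4 := by
                simp only [hkdef]; field_simp
            _ ≤ (g s) ^ 2 := hg2
            _ = ((a s) ^ 2 * v' s) ^ 2 * (a s) ^ 4 := hgeq
        exact le_of_mul_le_mul_right hstep (by positivity)
      have hnorm : ‖((1 - s)⁻¹) ^ 2‖ = ((1 - s)⁻¹) ^ 2 := by
        rw [Real.norm_eq_abs, abs_of_nonneg (by positivity)]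
      rw [hnorm]
      rw [← mul_le_mul_iff_of_pos_left hk]
      calc k * ((1 - s)⁻¹) ^ 2 ≤ ((a s) ^ 2 * v' s) ^ 2 := hmain
        _ = k * (k⁻¹ * ((a s) ^ 2 * v' s) ^ 2) := by field_simp
  -- conclusions
  rw [hL0] at htendg hkey
  refine ⟨htendg, ?_⟩
  intro s hs
  have hb := hkey s hs
  simp only [sub_zero] at hb
  have hu : (0:ℝ) ≤ 1 - s := by linarith [hs.2]
  have hcube : c ^ 3 * ((1 - s) * Real.sqrt (1 - s)) ≤ (a s) ^ 3 := by
    have h3 := pow_le_pow_left₀ (by positivity) (hab s hs).1 3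
    have hsq : Real.sqrt (1 - s) ^ 2 = 1 - s := Real.sq_sqrt hu
    calc c ^ 3 * ((1 - s) * Real.sqrt (1 - s))
        = c ^ 3 * (Real.sqrt (1 - s) ^ 2 * Real.sqrt (1 - s)) := by rw [hsq]
      _ = (c * Real.sqrt (1 - s)) ^ 3 := by ring
      _ ≤ (a s) ^ 3 := h3
  have h1 : 2 * C₁ / (3 * c ^ 3) * M * (c ^ 3 * ((1 - s) * Real.sqrt (1 - s)))
      ≤ 2 * C₁ / (3 * c ^ 3) * M * (a s) ^ 3 :=
    mul_le_mul_of_nonneg_left hcube (by positivity)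
  have h2 : 2 * C₁ / (3 * c ^ 3) * M * (c ^ 3 * ((1 - s) * Real.sqrt (1 - s))) = κ * φ s := by
    simp only [hκdef, hφdef]
    field_simp
  calc |g s| ≤ κ * φ s := hb
    _ ≤ 2 * C₁ / (3 * c ^ 3) * M * (a s) ^ 3 := by linarith
end
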